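/- arXiv:2506.19507 — 5 statements merged into one kernel-verified Lean document; each statement's English description precedes it below -/
import Mathlib

section
/- Let V be a finite set, f : Finset V → ℝ a nonnegative monotone submodular function with f(∅) = 0, M a matroid on V of rank k ≥ 2, and let P_1, …, P_k be a greedy splitting sequence for (f, M). Then for every feasible partition P* of V (a partition into nonempty parts admitting a basis B of M with |B ∩ X| = 1 for every class X ∈ P*), we have Σ_{X ∈ P_k} f(X) ≤ (2 − 2/k) · Σ_{X ∈ P*} f(X). -/
/-!
Write `β C = f C + f (V \ C) - f V` for the gain of cutting a class `C` of `P*` off `V`.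
When the greedy partition `P_i` has `i < k` classes, extend an independent transversal of it
to a basis `J` that meets every class of `P_i` and shares as many elements as possible with
the basis `B` of `P*`. By the exchange axiom, `J ∩ Y ⊆ B` for every class `Y` that `J` meets
at least twice, and these classes hold at least `k - i + 1` elements of `B`, which lie in
distinct classes `C` of `P*`. Splitting `Y` along such a `C` is admissible, so by greedy
minimality and submodularity the `i`-th greedy increment is at most `β C`. Hence the `i`-th
increment is at most the `i`-th smallest value of `β`, and the greedy cost is at most
`f V + ∑ β - max β`. The bound follows from `∑ β ≤ k · max β`, `f (V \ C) ≤ f V` and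
`f (V \ C) ≤ ∑_{P*} f - f C`.
-/

open Finset

variable {V : Type*} [Fintype V] [DecidableEq V]

/-- `P` is a partition of the finite ground set into nonempty parts. -/
def IsPartition (P : Finset (Finset V)) : Prop :=
  (∀ X ∈ P, X.Nonempty) ∧
  (∀ X ∈ P, ∀ Y ∈ P, X ≠ Y → Disjoint X Y) ∧
  P.sup id = Finset.univ

/-- `P` is a feasible partition for the rank-`k` matroid given by `Indep`. -/
def Feasible (Indep : Finset V → Prop) (k : ℕ) (P : Finset (Finset V)) : Prop :=
  IsPartition P ∧ ∃ B : Finset V, Indep B ∧ B.card = k ∧ ∀ X ∈ P, (B ∩ X).card = 1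

/-- `P` admits an independent transversal: there is an independent set containing
exactly one element of each class of `P`. -/
def AdmitsTransversal (Indep : Finset V → Prop) (P : Finset (Finset V)) : Prop :=
  ∃ I : Finset V, Indep I ∧ ∀ X ∈ P, (I ∩ X).card = 1

/-- A greedy splitting sequence for `(f, M)`: it starts with the trivial partition
`{V}` and, at each step, one class `W` is split into nonempty parts `X, W \ X` such
that the new partition admits an independent transversal and the split minimizes
`f(X') + f(W' \ X') - f(W')` over all such admissible splits. -/
def GreedySplitSeq (f : Finset V → ℝ) (Indep : Finset V → Prop) (k : ℕ)
    (P : ℕ → Finset (Finset V)) : Prop :=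
  P 1 = {Finset.univ} ∧
  ∀ i : ℕ, 1 ≤ i → i + 1 ≤ k →
    ∃ W ∈ P i, ∃ X : Finset V, X.Nonempty ∧ X ⊂ W ∧
      P (i + 1) = insert X (insert (W \ X) ((P i).erase W)) ∧
      AdmitsTransversal Indep (P (i + 1)) ∧
      ∀ W' ∈ P i, ∀ X' : Finset V, X'.Nonempty → X' ⊂ W' →
        AdmitsTransversal Indep (insert X' (insert (W' \ X') ((P i).erase W'))) →
        f X + f (W \ X) - f W ≤ f X' + f (W' \ X') - f W'

theorem sum_range_le_sum_sub_sup' {ι : Type*} [DecidableEq ι] (β : ι → ℝ) (n : ℕ)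
    (S : Finset ι) (hS : S.Nonempty) (hcard : #S = n + 1) (ε : ℕ → ℝ)
    (hε : ∀ i < n, #{x ∈ S | β x < ε i} ≤ i) :
    ∑ i ∈ range n, ε i ≤ ∑ x ∈ S, β x - S.sup' hS β := by
  induction n generalizing S ε with
  | zero =>
    obtain ⟨a, rfl⟩ := card_eq_one.mp hcard
    simp
  | succ n ih =>
    obtain ⟨x₀, hx₀, hmin⟩ := S.exists_min_image β hS
    have hcard' : #(S.erase x₀) = n + 1 := by rw [card_erase_of_mem hx₀, hcard]; rfl
    have hS' : (S.erase x₀).Nonempty := card_pos.mp (by omega)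
    have hε₀ : ε 0 ≤ β x₀ := by
      by_contra! h
      have : #{x ∈ S | β x < ε 0} ≠ 0 :=
        card_ne_zero_of_mem (mem_filter.mpr ⟨hx₀, h⟩)
      exact this (Nat.le_zero.mp (hε 0 (Nat.succ_pos n)))
    -- removing the minimum lowers each count by one, or leaves it empty
    have hε' : ∀ i < n, #{x ∈ S.erase x₀ | β x < ε (i + 1)} ≤ i := by
      intro i hi
      rw [filter_erase]
      by_cases hlt : β x₀ < ε (i + 1)
      · rw [card_erase_of_mem (mem_filter.mpr ⟨hx₀, hlt⟩)]
        have := hε (i + 1) (by omega)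
        omega
      · have : {x ∈ S | β x < ε (i + 1)} = ∅ :=
          filter_eq_empty_iff.mpr fun x hx => by linarith [hmin x hx]
        simp [this]
    have hsup : S.sup' hS β ≤ (S.erase x₀).sup' hS' β := by
      refine sup'_le hS β fun y hy => ?_
      by_cases hyx : y = x₀
      · obtain ⟨z, hz⟩ := hS'
        exact hyx ▸ (hmin z (mem_of_mem_erase hz)).trans (le_sup' β hz)
      · exact le_sup' β (mem_erase.mpr ⟨hyx, hy⟩)
    have := ih (S.erase x₀) hS' hcard' (fun i => ε (i + 1)) hε'
    rw [sum_range_succ', ← add_sum_erase S β hx₀]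
    linarith

theorem Finset.sum_lt_card_add_sum_filter_two_le {ι : Type*} (s : Finset ι) (a : ι → ℕ)
    (h : #s < ∑ i ∈ s, a i) : ∑ i ∈ s, a i < #s + ∑ i ∈ s with 2 ≤ a i, a i := by
  have hsmall : ∑ i ∈ s with ¬2 ≤ a i, a i ≤ #{i ∈ s | ¬2 ≤ a i} :=
    card_eq_sum_ones {i ∈ s | ¬2 ≤ a i} ▸ sum_le_sum fun i hi => by
      have := (mem_filter.mp hi).2
      omega
  have hbig : #{i ∈ s | 2 ≤ a i} = 0 → ∑ i ∈ s with 2 ≤ a i, a i = 0 := fun h0 => by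
    rw [card_eq_zero.mp h0, sum_empty]
  have := s.sum_filter_add_sum_filter_not (2 ≤ a ·) a
  have := s.card_filter_add_card_filter_not (2 ≤ a ·)
  omega

theorem apply_sup_le_sum {α : Type*} [DecidableEq α] {f : Finset α → ℝ}
    (h_submod : ∀ A B : Finset α, f (A ∪ B) + f (A ∩ B) ≤ f A + f B)
    (h_empty_f : f ∅ = 0) (h_nonneg : ∀ A : Finset α, 0 ≤ f A) (Q : Finset (Finset α)) :
    f (Q.sup id) ≤ ∑ X ∈ Q, f X := by
  induction Q using Finset.induction with
  | empty => simp [h_empty_f]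
  | insert X Q hX ih =>
    rw [sup_insert, sum_insert hX, id, sup_eq_union]
    linarith [h_submod X (Q.sup id), h_nonneg (X ∩ Q.sup id)]

theorem exists_indep_superset_card_eq {α : Type*} [DecidableEq α] {Indep : Finset α → Prop}
    (h_exchange : ∀ ⦃I J : Finset α⦄, Indep I → Indep J → #I < #J →
      ∃ e ∈ J \ I, Indep (insert e I))
    {I B : Finset α} (hI : Indep I) (hB : Indep B) (hIB : #I ≤ #B) :
    ∃ J, Indep J ∧ I ⊆ J ∧ #J = #B := by
  induction h : #B - #I generalizing I with
  | zero => exact ⟨I, hI, subset_rfl, by omega⟩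
  | succ n ih =>
    obtain ⟨e, he, hIe⟩ := h_exchange hI hB (by omega)
    have heI := (mem_sdiff.mp he).2
    obtain ⟨J, hJ, hIJ, hJB⟩ := ih hIe (by rw [card_insert_of_notMem heI]; omega)
      (by rw [card_insert_of_notMem heI]; omega)
    exact ⟨J, hJ, (subset_insert e I).trans hIJ, hJB⟩

def splitPartition (Q : Finset (Finset V)) (W X : Finset V) : Finset (Finset V) :=
  insert X (insert (W \ X) (Q.erase W))

def splitGain (f : Finset V → ℝ) (W X : Finset V) : ℝ := f X + f (W \ X) - f W

namespace IsPartition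

variable {Q : Finset (Finset V)}

theorem exists_mem (hQ : IsPartition Q) (a : V) : ∃ Y ∈ Q, a ∈ Y := by
  have ha : a ∈ Q.sup id := hQ.2.2 ▸ mem_univ a
  simpa using mem_sup.mp ha

theorem sum_card_inter (hQ : IsPartition Q) (A : Finset V) : ∑ Y ∈ Q, #(A ∩ Y) = #A := by
  rw [← card_biUnion fun Y hY Z hZ hYZ =>
    (hQ.2.1 Y hY Z hZ hYZ).mono inter_subset_right inter_subset_right]
  congr
  ext a
  simp only [mem_biUnion, mem_inter]
  exact ⟨fun ⟨_, _, ha, _⟩ => ha, fun ha =>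
    let ⟨Y, hY, haY⟩ := hQ.exists_mem a; ⟨Y, hY, ha, haY⟩⟩

theorem sup_erase (hQ : IsPartition Q) {C : Finset V} (hC : C ∈ Q) :
    (Q.erase C).sup id = univ \ C := by
  ext a
  simp only [mem_sup, mem_erase, mem_sdiff, mem_univ, true_and, id]
  constructor
  · rintro ⟨Y, ⟨hYC, hY⟩, haY⟩ haC
    exact disjoint_left.mp (hQ.2.1 Y hY C hC hYC) haY haC
  · intro haC
    obtain ⟨Y, hY, haY⟩ := hQ.exists_mem a
    exact ⟨Y, ⟨fun h => haC (h ▸ haY), hY⟩, haY⟩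

theorem notMem_erase (hQ : IsPartition Q) {W A : Finset V} (hW : W ∈ Q) (hA : A.Nonempty)
    (hAW : A ⊆ W) : A ∉ Q.erase W := fun h => by
  obtain ⟨a, ha⟩ := hA
  exact disjoint_left.mp (hQ.2.1 A (mem_of_mem_erase h) W hW (ne_of_mem_erase h)) ha (hAW ha)

theorem card_lt_card_add_card_biUnion {J : Finset V} (hQ : IsPartition Q) (h : #Q < #J) :
    #J < #Q + #({Y ∈ Q | 2 ≤ #(J ∩ Y)}.biUnion (J ∩ ·)) := by
  have := Q.sum_lt_card_add_sum_filter_two_le (fun Y => #(J ∩ Y)) (hQ.sum_card_inter J ▸ h)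
  rwa [hQ.sum_card_inter, ← card_biUnion fun Y hY Z hZ hYZ =>
    (hQ.2.1 Y (mem_filter.mp hY).1 Z (mem_filter.mp hZ).1 hYZ).mono
      inter_subset_right inter_subset_right] at this

theorem inter_erase_nonempty (hQ : IsPartition Q)
    {J Y Z : Finset V} {w : V} (hY : Y ∈ Q) (hwY : w ∈ Y) (hJY : 2 ≤ #(J ∩ Y))
    (hZ : Z ∈ Q) (hJZ : (J ∩ Z).Nonempty) : (J.erase w ∩ Z).Nonempty := by
  rw [erase_inter]
  by_cases hZY : Z = Y
  · subst hZY
    exact card_pos.mp (by have := pred_card_le_card_erase (s := J ∩ Z) (a := w); omega)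
  · rwa [erase_eq_of_notMem fun h => disjoint_left.mp (hQ.2.1 Y hY Z hZ (Ne.symm hZY)) hwY
      (mem_inter.mp h).2]

theorem apply_compl_le {f : Finset V → ℝ} (hQ : IsPartition Q)
    (h_submod : ∀ A B : Finset V, f (A ∪ B) + f (A ∩ B) ≤ f A + f B)
    (h_empty_f : f ∅ = 0) (h_nonneg : ∀ A : Finset V, 0 ≤ f A) {C : Finset V} (hC : C ∈ Q) :
    f (univ \ C) ≤ ∑ X ∈ Q, f X - f C := by
  rw [← hQ.sup_erase hC, ← sum_erase_eq_sub hC]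
  exact apply_sup_le_sum h_submod h_empty_f h_nonneg _

end IsPartition

theorem Feasible.card_eq {Indep : Finset V → Prop} {k : ℕ} {P : Finset (Finset V)}
    (h : Feasible Indep k P) : #P = k := by
  obtain ⟨hP, B, -, hBk, hBP⟩ := h
  rw [← hBk, ← hP.sum_card_inter B, sum_congr rfl hBP, card_eq_sum_ones]

section Split

variable {Q : Finset (Finset V)} {W X : Finset V}

theorem notMem_splitPartition (hQ : IsPartition Q) (hW : W ∈ Q) (hX : X.Nonempty)
    (hXW : X ⊂ W) : X ∉ insert (W \ X) (Q.erase W) ∧ W \ X ∉ Q.erase W := by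
  obtain ⟨x, hx⟩ := hX
  refine ⟨fun h => (mem_insert.mp h).elim (fun h' => ?_)
      (hQ.notMem_erase hW ⟨x, hx⟩ hXW.subset),
    hQ.notMem_erase hW (sdiff_nonempty.mpr (not_subset_of_ssubset hXW)) sdiff_subset⟩
  exact (mem_sdiff.mp (h' ▸ hx)).2 hx

theorem isPartition_splitPartition (hQ : IsPartition Q) (hW : W ∈ Q) (hX : X.Nonempty)
    (hXW : X ⊂ W) :
    IsPartition (splitPartition Q W X) := by
  have hdisj : ∀ A ⊆ W, ∀ Y ∈ Q.erase W, Disjoint A Y := fun A hA Y hY =>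
    (hQ.2.1 W hW Y (mem_of_mem_erase hY) (ne_of_mem_erase hY).symm).mono_left hA
  have hpw : (Q.erase W : Set (Finset V)).PairwiseDisjoint id := fun Y hY Z hZ hYZ =>
    hQ.2.1 Y (mem_of_mem_erase hY) Z (mem_of_mem_erase hZ) hYZ
  have hpw' : (splitPartition Q W X : Set (Finset V)).PairwiseDisjoint id := by
    rw [splitPartition, coe_insert, coe_insert]
    refine (hpw.insert fun Y hY _ => hdisj _ sdiff_subset Y hY).insert fun Y hY _ => ?_
    rcases hY with rfl | hY
    · exact disjoint_sdiff
    · exact hdisj X hXW.subset Y hY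
  refine ⟨fun Y hY => ?_, fun Y hY Z hZ hYZ => hpw' hY hZ hYZ, eq_univ_of_forall fun a => ?_⟩
  · simp only [splitPartition, mem_insert] at hY
    rcases hY with rfl | rfl | hY
    · exact hX
    · exact sdiff_nonempty.mpr (not_subset_of_ssubset hXW)
    · exact hQ.1 Y (mem_of_mem_erase hY)
  · obtain ⟨Y, hY, haY⟩ := hQ.exists_mem a
    simp only [mem_sup, id, splitPartition, mem_insert, mem_erase, exists_eq_or_imp]
    by_cases hYW : Y = W
    · subst hYW
      by_cases haX : a ∈ X
      · exact .inl haX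
      · exact .inr (.inl (mem_sdiff.mpr ⟨haY, haX⟩))
    · exact .inr (.inr ⟨Y, ⟨hYW, hY⟩, haY⟩)

theorem card_splitPartition (hQ : IsPartition Q) (hW : W ∈ Q) (hX : X.Nonempty)
    (hXW : X ⊂ W) : #(splitPartition Q W X) = #Q + 1 := by
  obtain ⟨h₁, h₂⟩ := notMem_splitPartition hQ hW hX hXW
  rw [splitPartition, card_insert_of_notMem h₁, card_insert_of_notMem h₂,
    card_erase_add_one hW]

theorem sum_splitPartition (hQ : IsPartition Q) (hW : W ∈ Q) (hX : X.Nonempty)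
    (hXW : X ⊂ W) (f : Finset V → ℝ) :
    ∑ Y ∈ splitPartition Q W X, f Y = ∑ Y ∈ Q, f Y + splitGain f W X := by
  obtain ⟨h₁, h₂⟩ := notMem_splitPartition hQ hW hX hXW
  rw [splitPartition, sum_insert h₁, sum_insert h₂, sum_erase_eq_sub hW, splitGain]
  ring

end Split

section Greedy

variable {f : Finset V → ℝ} {Indep : Finset V → Prop}

theorem splitGain_inter_le (h_submod : ∀ A B : Finset V, f (A ∪ B) + f (A ∩ B) ≤ f A + f B)
    (Y C : Finset V) : splitGain f Y (Y ∩ C) ≤ splitGain f univ C := by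
  have h₁ := h_submod C Y
  have h₂ := h_submod (univ \ C) (C ∪ Y)
  rw [show (univ \ C) ∪ (C ∪ Y) = univ by ext; simp; tauto,
    show (univ \ C) ∩ (C ∪ Y) = Y \ C by ext; simp; tauto] at h₂
  rw [splitGain, splitGain, sdiff_inter_self_left, inter_comm]
  linarith

theorem admitsTransversal_of_inter_nonempty
    (h_subset : ∀ ⦃I J : Finset V⦄, Indep J → I ⊆ J → Indep I) {Q : Finset (Finset V)}
    (hQ : IsPartition Q) {J : Finset V} (hJ : Indep J) (hcov : ∀ Y ∈ Q, (J ∩ Y).Nonempty) :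
    AdmitsTransversal Indep Q := by
  choose rep hrep using hcov
  refine ⟨Q.attach.image fun Y => rep Y.1 Y.2, h_subset hJ ?_, fun Y hY => ?_⟩
  · simpa [image_subset_iff] using fun Y hY => (mem_inter.mp (hrep Y hY)).1
  · refine card_eq_one.mpr ⟨rep Y hY, eq_singleton_iff_unique_mem.mpr
      ⟨mem_inter.mpr ⟨mem_image.mpr ⟨⟨Y, hY⟩, mem_attach _ _, rfl⟩,
        (mem_inter.mp (hrep Y hY)).2⟩,
        fun a ha => ?_⟩⟩
    obtain ⟨ha, haY⟩ := mem_inter.mp ha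
    obtain ⟨⟨Z, hZ⟩, -, rfl⟩ := mem_image.mp ha
    obtain rfl : Z = Y := by
      by_contra hZY
      exact disjoint_left.mp (hQ.2.1 Z hZ Y hY hZY) (mem_inter.mp (hrep Z hZ)).2 haY
    rfl

theorem exists_indep_inter_subset_of_two_le
    (h_subset : ∀ ⦃I J : Finset V⦄, Indep J → I ⊆ J → Indep I)
    (h_exchange : ∀ ⦃I J : Finset V⦄, Indep I → Indep J → #I < #J →
      ∃ e ∈ J \ I, Indep (insert e I))
    {Q : Finset (Finset V)} (hQ : IsPartition Q) {B J₀ : Finset V} (hB : Indep B)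
    (hJ₀ : Indep J₀) (hJ₀B : #J₀ = #B) (hcov : ∀ Y ∈ Q, (J₀ ∩ Y).Nonempty) :
    ∃ J, Indep J ∧ #J = #B ∧ (∀ Y ∈ Q, (J ∩ Y).Nonempty) ∧
      ∀ Y ∈ Q, 2 ≤ #(J ∩ Y) → J ∩ Y ⊆ B := by
  classical
  obtain ⟨J, hJmem, hJmax⟩ := exists_max_image
    {J | Indep J ∧ #J = #B ∧ ∀ Y ∈ Q, (J ∩ Y).Nonempty} (fun J => #(J ∩ B))
    ⟨J₀, mem_filter.mpr ⟨mem_univ _, hJ₀, hJ₀B, hcov⟩⟩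
  simp only [mem_filter, mem_univ, true_and] at hJmem hJmax
  obtain ⟨hJ, hJB, hJcov⟩ := hJmem
  refine ⟨J, hJ, hJB, hJcov, fun Y hY hJY w hw => ?_⟩
  by_contra hwB
  obtain ⟨hwJ, hwY⟩ := mem_inter.mp hw
  have hJpos := card_pos.mpr ⟨w, hwJ⟩
  obtain ⟨e, he, hJe⟩ := h_exchange (h_subset hJ (erase_subset w J)) hB
    (by rw [card_erase_of_mem hwJ]; omega)
  obtain ⟨heB, heJ⟩ := mem_sdiff.mp he
  have hcard : #(insert e (J.erase w)) = #B := by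
    rw [card_insert_of_notMem heJ, card_erase_of_mem hwJ]
    omega
  have hcov' : ∀ Z ∈ Q, (insert e (J.erase w) ∩ Z).Nonempty := fun Z hZ =>
    (hQ.inter_erase_nonempty hY hwY hJY hZ (hJcov Z hZ)).mono
      (inter_subset_inter_right (subset_insert e _))
  have hmore : #(insert e (J.erase w) ∩ B) = #(J ∩ B) + 1 := by
    rw [insert_inter_of_mem heB, card_insert_of_notMem fun h => heJ (mem_inter.mp h).1,
      erase_inter, erase_eq_of_notMem fun h => hwB (mem_inter.mp h).2]
  have := hJmax _ ⟨hJe, hcard, hcov'⟩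
  omega

theorem le_splitGain_of_mem_of_notMem
    (h_submod : ∀ A B : Finset V, f (A ∪ B) + f (A ∩ B) ≤ f A + f B)
    (h_subset : ∀ ⦃I J : Finset V⦄, Indep J → I ⊆ J → Indep I)
    {Q : Finset (Finset V)} (hQ : IsPartition Q) {ε : ℝ}
    (hmin : ∀ W ∈ Q, ∀ X : Finset V, X.Nonempty → X ⊂ W →
      AdmitsTransversal Indep (splitPartition Q W X) → ε ≤ splitGain f W X)
    {J Y C : Finset V} (hJ : Indep J) (hcov : ∀ Z ∈ Q, (J ∩ Z).Nonempty) (hY : Y ∈ Q)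
    {u v : V} (hu : u ∈ J ∩ Y) (hv : v ∈ J ∩ Y) (huC : u ∈ C) (hvC : v ∉ C) :
    ε ≤ splitGain f univ C := by
  obtain ⟨huJ, huY⟩ := mem_inter.mp hu
  obtain ⟨hvJ, hvY⟩ := mem_inter.mp hv
  have hX : (Y ∩ C).Nonempty := ⟨u, mem_inter.mpr ⟨huY, huC⟩⟩
  have hXY : Y ∩ C ⊂ Y := (ssubset_iff_of_subset inter_subset_left).mpr
    ⟨v, hvY, fun h => hvC (mem_inter.mp h).2⟩
  have hcov' : ∀ Z ∈ splitPartition Q Y (Y ∩ C), (J ∩ Z).Nonempty := by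
    intro Z hZ
    rcases mem_insert.mp hZ with rfl | hZ
    · exact ⟨u, mem_inter.mpr ⟨huJ, mem_inter.mpr ⟨huY, huC⟩⟩⟩
    rcases mem_insert.mp hZ with rfl | hZ
    · exact ⟨v, mem_inter.mpr
        ⟨hvJ, mem_sdiff.mpr ⟨hvY, fun h => hvC (mem_inter.mp h).2⟩⟩⟩
    · exact hcov Z (mem_of_mem_erase hZ)
  exact (hmin Y hY _ hX hXY (admitsTransversal_of_inter_nonempty h_subset
    (isPartition_splitPartition hQ hY hX hXY) hJ hcov')).trans (splitGain_inter_le h_submod Y C)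

theorem card_filter_splitGain_lt_le
    (h_submod : ∀ A B : Finset V, f (A ∪ B) + f (A ∩ B) ≤ f A + f B)
    (h_subset : ∀ ⦃I J : Finset V⦄, Indep J → I ⊆ J → Indep I)
    (h_exchange : ∀ ⦃I J : Finset V⦄, Indep I → Indep J → #I < #J →
      ∃ e ∈ J \ I, Indep (insert e I))
    {k i : ℕ} {Q Pstar : Finset (Finset V)} (hQ : IsPartition Q) (hQi : #Q = i) (hik : i < k)
    (hQtr : AdmitsTransversal Indep Q) (hPstar : Feasible Indep k Pstar) {ε : ℝ}
    (hmin : ∀ W ∈ Q, ∀ X : Finset V, X.Nonempty → X ⊂ W →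
      AdmitsTransversal Indep (splitPartition Q W X) → ε ≤ splitGain f W X) :
    #{C ∈ Pstar | splitGain f univ C < ε} ≤ i - 1 := by
  have hPk := hPstar.card_eq
  obtain ⟨hPpart, B, hB, hBk, hBC⟩ := hPstar
  obtain ⟨I, hI, hIQ⟩ := hQtr
  have hIi : #I = i := by rw [← hQ.sum_card_inter I, sum_congr rfl hIQ, ← card_eq_sum_ones, hQi]
  obtain ⟨J₀, hJ₀, hIJ₀, hJ₀B⟩ :=
    exists_indep_superset_card_eq h_exchange hI hB (by omega)
  obtain ⟨J, hJ, hJB, hcov, hbig⟩ := exists_indep_inter_subset_of_two_le h_subset h_exchange hQ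
    hB hJ₀ hJ₀B fun Y hY =>
      (card_pos.mp (by rw [hIQ Y hY]; omega)).mono (inter_subset_inter_right hIJ₀)
  have hG := hQ.card_lt_card_add_card_biUnion (J := J) (by omega)
  set G := {Y ∈ Q | 2 ≤ #(J ∩ Y)}.biUnion (J ∩ ·)
  have hGB : G ⊆ B := biUnion_subset.mpr fun Y hY =>
    hbig Y (mem_filter.mp hY).1 (mem_filter.mp hY).2
  have hBC_le : ∀ C ∈ Pstar, ∀ a ∈ B ∩ C, ∀ b ∈ B ∩ C, a = b := fun C hC =>
    card_le_one.mp (hBC C hC).le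
  have hGC : #G ≤ #{C ∈ Pstar | ¬splitGain f univ C < ε} := by
    refine card_le_card_of_forall_subsingleton (· ∈ ·) (fun u hu => ?_) fun C hC a ha b hb =>
      hBC_le C (mem_filter.mp hC).1 a (mem_inter.mpr ⟨hGB ha.1, ha.2⟩) b
        (mem_inter.mpr ⟨hGB hb.1, hb.2⟩)
    obtain ⟨Y, hY, hu⟩ := mem_biUnion.mp hu
    obtain ⟨hYQ, hJY⟩ := mem_filter.mp hY
    obtain ⟨C, hC, huC⟩ := hPpart.exists_mem u
    obtain ⟨v, hv, hvu⟩ := exists_mem_ne (by omega : 1 < #(J ∩ Y)) u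
    have hvC : v ∉ C := fun hvC => hvu (hBC_le C hC v
      (mem_inter.mpr ⟨hbig Y hYQ hJY hv, hvC⟩) u (mem_inter.mpr ⟨hbig Y hYQ hJY hu, huC⟩))
    exact ⟨C, mem_filter.mpr ⟨hC, not_lt.mpr
      (le_splitGain_of_mem_of_notMem h_submod h_subset hQ hmin hJ hcov hYQ hu hv huC hvC)⟩, huC⟩
  have := Pstar.card_filter_add_card_filter_not (splitGain f univ · < ε)
  omega

theorem GreedySplitSeq.isPartition_card_admitsTransversal {k : ℕ} {P : ℕ → Finset (Finset V)}
    (hP : GreedySplitSeq f Indep k P) {b : V} (hb : Indep {b}) {i : ℕ} (hi : 1 ≤ i)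
    (hik : i ≤ k) : IsPartition (P i) ∧ #(P i) = i ∧ AdmitsTransversal Indep (P i) := by
  induction i, hi using Nat.le_induction with
  | base =>
    rw [hP.1]
    refine ⟨⟨?_, ?_, ?_⟩, card_singleton _, {b}, hb, ?_⟩ <;>
      simp [univ_nonempty_iff.mpr ⟨b⟩]
  | succ i hi ih =>
    obtain ⟨hpart, hcard, -⟩ := ih (by omega)
    obtain ⟨W, hW, X, hX, hXW, hPeq, hadm, -⟩ := hP.2 i hi hik
    change P (i + 1) = splitPartition (P i) W X at hPeq
    rw [hPeq]
    exact ⟨isPartition_splitPartition hpart hW hX hXW,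
      by rw [card_splitPartition hpart hW hX hXW, hcard], hPeq ▸ hadm⟩

theorem GreedySplitSeq.sum_le
    (h_submod : ∀ A B : Finset V, f (A ∪ B) + f (A ∩ B) ≤ f A + f B)
    (h_subset : ∀ ⦃I J : Finset V⦄, Indep J → I ⊆ J → Indep I)
    (h_exchange : ∀ ⦃I J : Finset V⦄, Indep I → Indep J → #I < #J →
      ∃ e ∈ J \ I, Indep (insert e I))
    {k : ℕ} {P : ℕ → Finset (Finset V)} (hP : GreedySplitSeq f Indep k P)
    {Pstar : Finset (Finset V)} (hPstar : Feasible Indep k Pstar) (hne : Pstar.Nonempty) :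
    ∑ X ∈ P k, f X ≤
      f univ + (∑ C ∈ Pstar, splitGain f univ C - Pstar.sup' hne (splitGain f univ)) := by
  have hk : 0 < k := hPstar.card_eq ▸ hne.card_pos
  obtain ⟨-, B, hB, hBk, -⟩ := id hPstar
  obtain ⟨b, hb⟩ := card_pos.mp (hBk ▸ hk)
  have hinv := fun i => hP.isPartition_card_admitsTransversal
    (h_subset hB (singleton_subset_iff.mpr hb)) (i := i)
  set Sf := fun i => ∑ X ∈ P i, f X
  have hinc : ∀ i < k - 1,
      #{C ∈ Pstar | splitGain f univ C < Sf (i + 2) - Sf (i + 1)} ≤ i := by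
    intro i hi
    obtain ⟨hpart, hcard, htr⟩ := hinv (i + 1) (by omega) (by omega)
    obtain ⟨W, hW, X, hX, hXW, hPeq, -, hmin⟩ := hP.2 (i + 1) (by omega) (by omega)
    have hε : Sf (i + 2) - Sf (i + 1) = splitGain f W X := by
      change P (i + 2) = splitPartition (P (i + 1)) W X at hPeq
      simp only [Sf, hPeq, sum_splitPartition hpart hW hX hXW]
      ring
    rw [hε]
    exact card_filter_splitGain_lt_le h_submod h_subset h_exchange hpart hcard (by omega) htr
      hPstar hmin
  have htele : ∑ i ∈ range (k - 1), (Sf (i + 2) - Sf (i + 1)) = Sf k - Sf 1 := by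
    rw [sum_range_sub (fun i => Sf (i + 1)), Nat.sub_add_cancel (by omega)]
  have hSf1 : Sf 1 = f univ := by simp only [Sf, hP.1, sum_singleton]
  have := sum_range_le_sum_sub_sup' (splitGain f univ) (k - 1) Pstar hne
    (by rw [hPstar.card_eq]; omega) _ hinc
  rw [htele, hSf1] at this
  linarith

end Greedy

theorem greedy_splitting_monotone_approx_general
    (f : Finset V → ℝ)
    (h_nonneg : ∀ A : Finset V, 0 ≤ f A)
    (h_submod : ∀ A B : Finset V, f (A ∪ B) + f (A ∩ B) ≤ f A + f B)
    (h_empty_f : f ∅ = 0)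
    (h_mono : ∀ ⦃A B : Finset V⦄, A ⊆ B → f A ≤ f B)
    (Indep : Finset V → Prop)
    (h_subset : ∀ ⦃I J : Finset V⦄, Indep J → I ⊆ J → Indep I)
    (h_exchange : ∀ ⦃I J : Finset V⦄, Indep I → Indep J → I.card < J.card →
      ∃ e ∈ J \ I, Indep (insert e I))
    (k : ℕ) (hk : 2 ≤ k)
    (P : ℕ → Finset (Finset V)) (hP : GreedySplitSeq f Indep k P)
    (Pstar : Finset (Finset V)) (hPstar : Feasible Indep k Pstar) :
    ∑ X ∈ P k, f X ≤ (2 - 2 / (k : ℝ)) * ∑ X ∈ Pstar, f X := by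
  have hcard := hPstar.card_eq
  have hne : Pstar.Nonempty := card_pos.mp (by omega)
  have hgreedy := hP.sum_le h_submod h_subset h_exchange hPstar hne
  set S := ∑ X ∈ Pstar, f X
  have hgain : ∑ C ∈ Pstar, splitGain f univ C =
      S + ∑ C ∈ Pstar, f (univ \ C) - k * f univ := by
    simp [splitGain, sum_add_distrib, sum_sub_distrib, hcard, S]
  have hmax : ∑ C ∈ Pstar, splitGain f univ C ≤ k * Pstar.sup' hne (splitGain f univ) := by
    simpa [hcard] using
      sum_le_card_nsmul Pstar (splitGain f univ) _ fun C hC => le_sup' (splitGain f univ) hC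
  have hcompl_mono : ∑ C ∈ Pstar, f (univ \ C) ≤ k * f univ := by
    simpa [hcard] using sum_le_card_nsmul Pstar _ _ fun C _ => h_mono (subset_univ (univ \ C))
  have hcompl_subadd : ∑ C ∈ Pstar, f (univ \ C) ≤ (k - 1) * S := calc
    _ ≤ ∑ C ∈ Pstar, (S - f C) :=
      sum_le_sum fun C hC => hPstar.1.apply_compl_le h_submod h_empty_f h_nonneg hC
    _ = (k - 1) * S := by simp [sum_sub_distrib, hcard, S]; ring
  have hk' : (2 : ℝ) ≤ k := by exact_mod_cast hk
  rw [show (2 - 2 / (k : ℝ)) * S = (2 * k - 2) * S / k by field_simp, le_div_iff₀ (by linarith)]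
  nlinarith [mul_le_mul_of_nonneg_left hgreedy (by linarith : (0 : ℝ) ≤ k),
    mul_le_mul_of_nonneg_left hcompl_mono (by linarith : (0 : ℝ) ≤ k - 2)]

/-- greedy splitting is a (2 - 2/k)-approximation for monotone submodular matroid-constrained partitioning. -/
theorem greedy_splitting_monotone_approx
    (f : Finset V → ℝ)
    (h_nonneg : ∀ A : Finset V, 0 ≤ f A)
    (h_submod : ∀ A B : Finset V, f (A ∪ B) + f (A ∩ B) ≤ f A + f B)
    (h_empty_f : f ∅ = 0)
    (h_mono : ∀ ⦃A B : Finset V⦄, A ⊆ B → f A ≤ f B)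
    (Indep : Finset V → Prop)
    (h_empty : Indep ∅)
    (h_subset : ∀ ⦃I J : Finset V⦄, Indep J → I ⊆ J → Indep I)
    (h_exchange : ∀ ⦃I J : Finset V⦄, Indep I → Indep J → I.card < J.card →
      ∃ e ∈ J \ I, Indep (insert e I))
    (k : ℕ) (hk : 2 ≤ k)
    (h_rank_le : ∀ I : Finset V, Indep I → I.card ≤ k)
    (h_rank_eq : ∃ B : Finset V, Indep B ∧ B.card = k)
    (P : ℕ → Finset (Finset V)) (hP : GreedySplitSeq f Indep k P)
    (Pstar : Finset (Finset V)) (hPstar : Feasible Indep k Pstar) :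
    ∑ X ∈ P k, f X ≤ (2 - 2 / (k : ℝ)) * ∑ X ∈ Pstar, f X :=
  greedy_splitting_monotone_approx_general f h_nonneg h_submod h_empty_f h_mono Indep h_subset
    h_exchange k hk P hP Pstar hPstar
end

section
/- Let V be a finite set, f : Finset V → ℝ a nonnegative monotone submodular function with f(∅) = 0, and M a matroid on V of rank k ≥ 1. Let I = {v_1, …, v_{k−1}} be an independent set of M of size k − 1 minimizing Σ_{v ∈ I'} f({v}) over all independent sets I' of size k − 1. Then the partition P = ({v_1}, …, {v_{k−1}}, V \ I) of V is feasible (there is a basis B of M with exactly one element in each class of P), and for every feasible partition P* of V, Σ_{X ∈ P} f(X) ≤ (2 − 1/k) · Σ_{X ∈ P*} f(X). -/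
open Finset

variable {V : Type*} [Fintype V] [DecidableEq V]

/-!
Augmenting `I` from a basis by one element `e ∉ I` gives a basis meeting every class of
`P = ({v₁}, …, {v_{k-1}}, V \ I)` exactly once. For the bound, let `P*` be feasible with basis
`B*`. By subadditivity, `f (V \ I) ≤ f V ≤ ∑_{X ∈ P*} f X`. By monotonicity,
`∑_{b ∈ B*} f {b} ≤ ∑_{X ∈ P*} f X`, and dropping the most expensive element of `B*` leaves an
independent `(k-1)`-set of singleton cost at most `(1 - 1/k) ∑_{X ∈ P*} f X`, which bounds the
singleton cost of `I` by its minimality.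
-/

section

variable {α : Type*} [DecidableEq α] {f : Finset α → ℝ}

lemma apply_sup_le_sum_of_submodular (h_nonneg : ∀ A, 0 ≤ f A)
    (h_submod : ∀ A B, f (A ∪ B) + f (A ∩ B) ≤ f A + f B) (h_empty : f ∅ = 0)
    (P : Finset (Finset α)) : f (P.sup id) ≤ ∑ X ∈ P, f X :=
  apply_sup_le_sum h_empty
    (fun {A B} => show f (A ∪ B) ≤ _ by linarith [h_submod A B, h_nonneg (A ∩ B)]) P

lemma sum_singleton_le_sum_of_card_inter_eq_one (h_mono : ∀ ⦃A B⦄, A ⊆ B → f A ≤ f B)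
    {P : Finset (Finset α)} {B : Finset α} (h_disj : (P : Set (Finset α)).PairwiseDisjoint id)
    (h_cover : B ⊆ P.sup id) (h_meet : ∀ X ∈ P, (B ∩ X).card = 1) :
    ∑ v ∈ B, f {v} ≤ ∑ X ∈ P, f X := by
  have hB : B = P.biUnion (B ∩ ·) := by
    ext v
    simp only [mem_biUnion, mem_inter]
    refine ⟨fun hv => ?_, fun ⟨_, _, hv, _⟩ => hv⟩
    obtain ⟨X, hX, hvX⟩ := mem_sup.1 (h_cover hv)
    exact ⟨X, hX, hv, hvX⟩
  have h_disj' : (P : Set (Finset α)).PairwiseDisjoint (B ∩ ·) :=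
    h_disj.mono fun _ => inter_subset_right
  rw [hB, sum_biUnion h_disj']
  gcongr with X hX
  obtain ⟨b, hb⟩ := card_eq_one.1 (h_meet X hX)
  have hbX : b ∈ X := (mem_inter.1 (hb ▸ mem_singleton_self b)).2
  rw [hb, sum_singleton]
  exact h_mono (singleton_subset_iff.2 hbX)

lemma exists_sum_erase_le (g : α → ℝ) {s : Finset α} (hs : s.Nonempty) :
    ∃ m ∈ s, ∑ v ∈ s.erase m, g v ≤ (1 - 1 / (s.card : ℝ)) * ∑ v ∈ s, g v := by
  obtain ⟨m, hm, hmax⟩ := exists_max_image s g hs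
  refine ⟨m, hm, ?_⟩
  have h_avg : ∑ v ∈ s, g v ≤ s.card * g m := by simpa using sum_le_card_nsmul s g (g m) hmax
  have h_card : (0 : ℝ) < s.card := by exact_mod_cast hs.card_pos
  have h_mean : 1 / (s.card : ℝ) * ∑ v ∈ s, g v ≤ g m := by
    rw [div_mul_eq_mul_div, one_mul, div_le_iff₀ h_card]
    linarith
  rw [sum_erase_eq_sub hm]
  linarith

end

def singletonPartition (I : Finset V) : Finset (Finset V) :=
  insert (univ \ I) (I.image fun v => {v})

lemma sdiff_notMem_image_singleton (I : Finset V) :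
    univ \ I ∉ I.image fun v => ({v} : Finset V) := by
  simp only [mem_image, not_exists, not_and]
  intro v hv h
  have : v ∈ univ \ I := h ▸ mem_singleton_self v
  simp [hv] at this

lemma sum_singletonPartition (f : Finset V → ℝ) (I : Finset V) :
    ∑ X ∈ singletonPartition I, f X = f (univ \ I) + ∑ v ∈ I, f {v} := by
  rw [singletonPartition, sum_insert (sdiff_notMem_image_singleton I),
    sum_image fun _ _ _ _ h => singleton_injective h]

lemma isPartition_singletonPartition {I : Finset V} (h : (univ \ I).Nonempty) :
    IsPartition (singletonPartition I) := by
  refine ⟨?_, ?_, ?_⟩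
  · simp only [singletonPartition, mem_insert, mem_image]
    rintro X (rfl | ⟨v, -, rfl⟩)
    exacts [h, singleton_nonempty v]
  · simp only [singletonPartition, mem_insert, mem_image]
    rintro X (rfl | ⟨v, hv, rfl⟩) Y (rfl | ⟨w, hw, rfl⟩) hXY
    · exact absurd rfl hXY
    · simpa using hw
    · simpa using hv
    · exact disjoint_singleton.2 fun hvw => hXY (hvw ▸ rfl)
  · refine eq_univ_of_forall fun x => mem_sup.2 ?_
    by_cases hx : x ∈ I
    · exact ⟨{x}, mem_insert_of_mem (mem_image_of_mem _ hx), mem_singleton_self x⟩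
    · exact ⟨univ \ I, mem_insert_self _ _, by simp [hx]⟩

lemma card_inter_singletonPartition {I : Finset V} {e : V} (he : e ∉ I) :
    ∀ X ∈ singletonPartition I, (insert e I ∩ X).card = 1 := by
  simp only [singletonPartition, mem_insert, mem_image]
  rintro X (rfl | ⟨v, hv, rfl⟩)
  · have : insert e I ∩ (univ \ I) = {e} := by
      ext x
      by_cases hx : x = e <;> simp [hx, he]
    rw [this, card_singleton]
  · rw [inter_eq_right.2 (singleton_subset_iff.2 (mem_insert_of_mem hv)), card_singleton]

lemma feasible_singletonPartition {Indep : Finset V → Prop} {k : ℕ} {I : Finset V} {e : V}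
    (he : e ∉ I) (hIe : Indep (insert e I)) (hk : I.card + 1 = k) :
    Feasible Indep k (singletonPartition I) :=
  ⟨isPartition_singletonPartition ⟨e, by simpa using he⟩, insert e I, hIe,
    by rw [card_insert_of_notMem he, hk], card_inter_singletonPartition he⟩

theorem cheapest_singleton_approx_general
    (f : Finset V → ℝ)
    (h_nonneg : ∀ A : Finset V, 0 ≤ f A)
    (h_submod : ∀ A B : Finset V, f (A ∪ B) + f (A ∩ B) ≤ f A + f B)
    (h_empty_f : f ∅ = 0)
    (h_mono : ∀ ⦃A B : Finset V⦄, A ⊆ B → f A ≤ f B)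
    (Indep : Finset V → Prop)
    (h_subset : ∀ ⦃I J : Finset V⦄, Indep J → I ⊆ J → Indep I)
    (h_exchange : ∀ ⦃I J : Finset V⦄, Indep I → Indep J → I.card < J.card →
      ∃ e ∈ J \ I, Indep (insert e I))
    (k : ℕ) (hk : 1 ≤ k)
    (h_rank_eq : ∃ B : Finset V, Indep B ∧ B.card = k)
    (I : Finset V) (hI : Indep I) (hIcard : I.card = k - 1)
    (h_min : ∀ I' : Finset V, Indep I' → I'.card = k - 1 →
      ∑ v ∈ I, f {v} ≤ ∑ v ∈ I', f {v}) :
    Feasible Indep k (insert (Finset.univ \ I) (I.image fun v => ({v} : Finset V))) ∧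
    ∀ Pstar : Finset (Finset V), Feasible Indep k Pstar →
      ∑ X ∈ insert (Finset.univ \ I) (I.image fun v => ({v} : Finset V)), f X ≤
        (2 - 1 / (k : ℝ)) * ∑ X ∈ Pstar, f X := by
  obtain ⟨B, hB, hBcard⟩ := h_rank_eq
  obtain ⟨e, he, hIe⟩ := h_exchange hI hB (by omega)
  refine ⟨feasible_singletonPartition (mem_sdiff.1 he).2 hIe (by omega), ?_⟩
  rintro Pstar ⟨⟨-, h_disj, h_cover⟩, Bs, hBs, hBscard, h_meet⟩
  obtain ⟨m, hm, h_erase⟩ := exists_sum_erase_le (fun v => f {v}) (s := Bs) (card_pos.1 (by omega))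
  have h_rest : f (univ \ I) ≤ ∑ X ∈ Pstar, f X := calc
    f (univ \ I) ≤ f (Pstar.sup id) := h_mono (h_cover ▸ subset_univ (univ \ I))
    _ ≤ ∑ X ∈ Pstar, f X := apply_sup_le_sum_of_submodular h_nonneg h_submod h_empty_f Pstar
  have h_basis : ∑ v ∈ Bs, f {v} ≤ ∑ X ∈ Pstar, f X :=
    sum_singleton_le_sum_of_card_inter_eq_one h_mono h_disj (h_cover ▸ subset_univ _) h_meet
  have h_frac : 0 ≤ 1 - 1 / (k : ℝ) :=
    sub_nonneg.2 (div_le_one_of_le₀ (by exact_mod_cast hk) (by positivity))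
  have h_cheap : ∑ v ∈ I, f {v} ≤ (1 - 1 / (k : ℝ)) * ∑ X ∈ Pstar, f X := calc
    ∑ v ∈ I, f {v} ≤ ∑ v ∈ Bs.erase m, f {v} :=
      h_min _ (h_subset hBs (erase_subset m Bs)) (by rw [card_erase_of_mem hm, hBscard])
    _ ≤ (1 - 1 / (k : ℝ)) * ∑ v ∈ Bs, f {v} := hBscard ▸ h_erase
    _ ≤ (1 - 1 / (k : ℝ)) * ∑ X ∈ Pstar, f X := mul_le_mul_of_nonneg_left h_basis h_frac
  refine (sum_singletonPartition f I).trans_le ?_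
  linarith

/-- the cheapest singleton algorithm. If `I` is an independent set of size
`k - 1` minimizing the total singleton cost, then the partition consisting of the
singletons of `I` together with `V \ I` is feasible and is a `(2 - 1/k)`-approximation
for monotone submodular matroid-constrained partitioning. -/
theorem cheapest_singleton_approx
    (f : Finset V → ℝ)
    (h_nonneg : ∀ A : Finset V, 0 ≤ f A)
    (h_submod : ∀ A B : Finset V, f (A ∪ B) + f (A ∩ B) ≤ f A + f B)
    (h_empty_f : f ∅ = 0)
    (h_mono : ∀ ⦃A B : Finset V⦄, A ⊆ B → f A ≤ f B)
    (Indep : Finset V → Prop)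
    (h_empty : Indep ∅)
    (h_subset : ∀ ⦃I J : Finset V⦄, Indep J → I ⊆ J → Indep I)
    (h_exchange : ∀ ⦃I J : Finset V⦄, Indep I → Indep J → I.card < J.card →
      ∃ e ∈ J \ I, Indep (insert e I))
    (k : ℕ) (hk : 1 ≤ k)
    (h_rank_le : ∀ I : Finset V, Indep I → I.card ≤ k)
    (h_rank_eq : ∃ B : Finset V, Indep B ∧ B.card = k)
    (I : Finset V) (hI : Indep I) (hIcard : I.card = k - 1)
    (h_min : ∀ I' : Finset V, Indep I' → I'.card = k - 1 →
      ∑ v ∈ I, f {v} ≤ ∑ v ∈ I', f {v}) :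
    Feasible Indep k (insert (Finset.univ \ I) (I.image fun v => ({v} : Finset V))) ∧
    ∀ Pstar : Finset (Finset V), Feasible Indep k Pstar →
      ∑ X ∈ insert (Finset.univ \ I) (I.image fun v => ({v} : Finset V)), f X ≤
        (2 - 1 / (k : ℝ)) * ∑ X ∈ Pstar, f X :=
  cheapest_singleton_approx_general f h_nonneg h_submod h_empty_f h_mono Indep h_subset h_exchange k
    hk h_rank_eq I hI hIcard h_min
end

section
/- Let k ≥ 2 and let V be a finite set partitioned into nonempty sets S_1, …, S_k, each of size at least 2. Define f : Finset V → ℝ by f(X) = min(k − 1, |{i ∈ [k] : X ∩ S_i ≠ ∅}|). Then: (a) f is monotone and submodular with f(∅) = 0; (b) the minimum of Σ_{X ∈ Q} f(X) over all partitions Q of V into k nonempty parts equals k, attained by {S_1, …, S_k}; and (c) there exists a sequence of partitions P_1, …, P_k of V with P_1 = {V} such that for each 1 ≤ i ≤ k − 1, P_{i+1} = (P_i \ {W}) ∪ {X, W \ X} for some class W ∈ P_i and nonempty proper subset X ⊊ W minimizing f(X') + f(W' \ X') − f(W') over all classes W' ∈ P_i and nonempty proper subsets X' ⊊ W', and Σ_{X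 ∈ P_k} f(X) = 2k − 2 = (2 − 2/k) · k. -/
/-!
Every nonempty set meets some part, so `f ≥ 1` on nonempty sets and every `k`-partition has
value at least `k`; the parts themselves have value `1` each. Greedy may instead split off one
representative `xᵢ ∈ Sᵢ` at a time. Since `|Sᵢ| ≥ 2`, the big class left over still meets every
part and keeps value `k - 1`, so each such split costs `1 + (k - 1) - (k - 1) = 1`, which is
optimal: the two sides of any split of the big class together meet all `k` parts, so their
values add up to at least `k`. After `k - 1` splits the value is `(k - 1) + (k - 1) = 2k - 2`.
-/

open Finset

variable {V : Type*} [Fintype V] [DecidableEq V]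

/-- A greedy splitting sequence for `f` (without matroid constraints): it starts with the
trivial partition `{V}` and, at each step, one class `W` is split into nonempty parts
`X, W \ X` minimizing `f(X') + f(W' \ X') - f(W')` over all possible splits. -/
def GreedySplitSeqFree (f : Finset V → ℝ) (k : ℕ) (P : ℕ → Finset (Finset V)) : Prop :=
  P 1 = {Finset.univ} ∧
  ∀ i : ℕ, 1 ≤ i → i + 1 ≤ k →
    ∃ W ∈ P i, ∃ X : Finset V, X.Nonempty ∧ X ⊂ W ∧
      P (i + 1) = insert X (insert (W \ X) ((P i).erase W)) ∧
      ∀ W' ∈ P i, ∀ X' : Finset V, X'.Nonempty → X' ⊂ W' →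
        f X + f (W \ X) - f W ≤ f X' + f (W' \ X') - f W'

/-- The tight instance: `f(X) = min(k - 1, #{i : X ∩ Sᵢ ≠ ∅})`. -/
noncomputable def truncCover (k : ℕ) (S : Fin k → Finset V) (X : Finset V) : ℝ :=
  ((min (k - 1) ((Finset.univ.filter fun i => (X ∩ S i).Nonempty).card) : ℕ) : ℝ)

section HitSet

omit [Fintype V]

variable {k : ℕ} (S : Fin k → Finset V)

def hitSet (X : Finset V) : Finset (Fin k) := {i | (X ∩ S i).Nonempty}

lemma truncCover_eq_min_card_hitSet (X : Finset V) :
    truncCover k S X = (min (k - 1) #(hitSet S X) : ℕ) := rfl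

variable {S}

@[simp]
lemma mem_hitSet {X : Finset V} {i : Fin k} : i ∈ hitSet S X ↔ (X ∩ S i).Nonempty := by
  simp [hitSet]

lemma hitSet_mono {A B : Finset V} (h : A ⊆ B) : hitSet S A ⊆ hitSet S B := fun i hi => by
  rw [mem_hitSet] at hi ⊢
  exact hi.mono (inter_subset_inter_right h)

lemma hitSet_union (A B : Finset V) : hitSet S (A ∪ B) = hitSet S A ∪ hitSet S B := by
  ext i
  simp [union_inter_distrib_right]

lemma card_hitSet_union_add_card_hitSet_inter_le (A B : Finset V) :
    #(hitSet S (A ∪ B)) + #(hitSet S (A ∩ B)) ≤ #(hitSet S A) + #(hitSet S B) := by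
  rw [hitSet_union, ← card_union_add_card_inter (hitSet S A)]
  gcongr
  exact subset_inter (hitSet_mono inter_subset_left) (hitSet_mono inter_subset_right)

lemma truncCover_empty : truncCover k S ∅ = 0 := by
  simp [truncCover_eq_min_card_hitSet, hitSet]

lemma truncCover_mono {A B : Finset V} (h : A ⊆ B) : truncCover k S A ≤ truncCover k S B := by
  simp only [truncCover_eq_min_card_hitSet]
  gcongr
  exact hitSet_mono h

lemma truncCover_union_add_truncCover_inter_le (A B : Finset V) :
    truncCover k S (A ∪ B) + truncCover k S (A ∩ B) ≤ truncCover k S A + truncCover k S B := by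
  simp only [truncCover_eq_min_card_hitSet]
  have := card_hitSet_union_add_card_hitSet_inter_le (S := S) A B
  have := card_le_card (hitSet_mono (S := S) (inter_subset_left : A ∩ B ⊆ A))
  have := card_le_card (hitSet_mono (S := S) (inter_subset_right : A ∩ B ⊆ B))
  exact_mod_cast (by omega :
    min (k - 1) #(hitSet S (A ∪ B)) + min (k - 1) #(hitSet S (A ∩ B)) ≤
      min (k - 1) #(hitSet S A) + min (k - 1) #(hitSet S B))

end HitSet

section Parts

variable {k : ℕ} {S : Fin k → Finset V}

section

omit [Fintype V]

omit [DecidableEq V] in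
lemma eq_of_mem_of_mem (h_disj : ∀ i j, i ≠ j → Disjoint (S i) (S j)) {v : V} {i j : Fin k}
    (hi : v ∈ S i) (hj : v ∈ S j) : i = j := by
  by_contra hij
  exact disjoint_left.1 (h_disj i j hij) hi hj

lemma hitSet_nonempty (h_cover : ∀ v : V, ∃ i, v ∈ S i) {X : Finset V} (hX : X.Nonempty) :
    (hitSet S X).Nonempty := by
  obtain ⟨v, hv⟩ := hX
  obtain ⟨i, hi⟩ := h_cover v
  exact ⟨i, mem_hitSet.2 ⟨v, mem_inter.2 ⟨hv, hi⟩⟩⟩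

lemma hitSet_eq_singleton (h_disj : ∀ i j, i ≠ j → Disjoint (S i) (S j)) {X : Finset V}
    {i : Fin k} (hX : X.Nonempty) (hXS : X ⊆ S i) : hitSet S X = {i} := by
  refine eq_singleton_iff_unique_mem.2 ⟨mem_hitSet.2 (by rwa [inter_eq_left.2 hXS]), ?_⟩
  rintro j hj
  obtain ⟨v, hv⟩ := mem_hitSet.1 hj
  exact eq_of_mem_of_mem h_disj (mem_inter.1 hv).2 (hXS (mem_inter.1 hv).1)

lemma hitSet_eq_univ {X : Finset V} (hX : ∀ j, (X ∩ S j).Nonempty) : hitSet S X = univ :=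
  eq_univ_of_forall fun j => mem_hitSet.2 (hX j)

lemma one_le_truncCover (hk : 2 ≤ k) (h_cover : ∀ v : V, ∃ i, v ∈ S i) {X : Finset V}
    (hX : X.Nonempty) : 1 ≤ truncCover k S X := by
  have := (hitSet_nonempty h_cover hX).card_pos
  rw [truncCover_eq_min_card_hitSet]
  exact_mod_cast (by omega : 1 ≤ min (k - 1) #(hitSet S X))

lemma truncCover_eq_one (hk : 2 ≤ k) (h_disj : ∀ i j, i ≠ j → Disjoint (S i) (S j))
    {X : Finset V} {i : Fin k} (hX : X.Nonempty) (hXS : X ⊆ S i) : truncCover k S X = 1 := by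
  rw [truncCover_eq_min_card_hitSet, hitSet_eq_singleton h_disj hX hXS, card_singleton,
    min_eq_right (by omega), Nat.cast_one]

lemma truncCover_eq_sub_one (hk : 2 ≤ k) {X : Finset V} (hX : ∀ j, (X ∩ S j).Nonempty) :
    truncCover k S X = k - 1 := by
  rw [truncCover_eq_min_card_hitSet, hitSet_eq_univ hX, card_univ, Fintype.card_fin,
    min_eq_left (by omega), Nat.cast_pred (by omega)]

lemma le_truncCover_add_truncCover_sdiff (hk : 2 ≤ k) (h_cover : ∀ v : V, ∃ i, v ∈ S i)
    {W X : Finset V} (hW : ∀ j, (W ∩ S j).Nonempty) (hX : X.Nonempty) (hXW : X ⊂ W) :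
    k ≤ truncCover k S X + truncCover k S (W \ X) := by
  have hcover : k ≤ #(hitSet S X) + #(hitSet S (W \ X)) :=
    calc k = #(hitSet S W) := by rw [hitSet_eq_univ hW, card_univ, Fintype.card_fin]
      _ = #(hitSet S X ∪ hitSet S (W \ X)) := by
        rw [← hitSet_union, union_sdiff_of_subset hXW.subset]
      _ ≤ _ := card_union_le _ _
  have := (hitSet_nonempty h_cover hX).card_pos
  have := (hitSet_nonempty h_cover (sdiff_nonempty.2 hXW.2)).card_pos
  simp only [truncCover_eq_min_card_hitSet]
  exact_mod_cast (by omega :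
    k ≤ min (k - 1) #(hitSet S X) + min (k - 1) #(hitSet S (W \ X)))

lemma card_le_sum_truncCover (hk : 2 ≤ k) (h_cover : ∀ v : V, ∃ i, v ∈ S i)
    {Q : Finset (Finset V)} (hQ : ∀ X ∈ Q, X.Nonempty) : #Q ≤ ∑ X ∈ Q, truncCover k S X := by
  simpa using sum_le_sum fun X hX => one_le_truncCover hk h_cover (hQ X hX)

omit [DecidableEq V] in
lemma injective_of_pairwise_disjoint (hS : ∀ i, (S i).Nonempty)
    (h_disj : ∀ i j, i ≠ j → Disjoint (S i) (S j)) : Function.Injective S := fun i j hij => by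
  obtain ⟨v, hv⟩ := hS i
  exact eq_of_mem_of_mem h_disj hv (hij ▸ hv)

lemma sum_truncCover_image (hk : 2 ≤ k) (hS : ∀ i, (S i).Nonempty)
    (h_disj : ∀ i j, i ≠ j → Disjoint (S i) (S j)) :
    ∑ X ∈ univ.image S, truncCover k S X = k := by
  rw [sum_image fun i _ j _ hij => injective_of_pairwise_disjoint hS h_disj hij]
  simp [truncCover_eq_one hk h_disj (hS _) subset_rfl]

end

lemma isPartition_image (hS : ∀ i, (S i).Nonempty)
    (h_disj : ∀ i j, i ≠ j → Disjoint (S i) (S j)) (h_cover : ∀ v : V, ∃ i, v ∈ S i) :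
    IsPartition (univ.image S) := by
  refine ⟨?_, ?_, eq_univ_of_forall fun v => ?_⟩
  · simp only [mem_image, mem_univ, true_and, forall_exists_index, forall_apply_eq_imp_iff]
    exact hS
  · simp only [mem_image, mem_univ, true_and, forall_exists_index, forall_apply_eq_imp_iff]
    exact fun i j hij => h_disj i j (ne_of_apply_ne S hij)
  · obtain ⟨i, hi⟩ := h_cover v
    exact mem_sup.2 ⟨S i, mem_image_of_mem S (mem_univ i), hi⟩

end Parts

def splitOff (k n : ℕ) : Finset (Fin k) := {i | (i : ℕ) < n}

lemma splitOff_zero (k : ℕ) : splitOff k 0 = ∅ := by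
  ext
  simp [splitOff]

lemma splitOff_succ {k n : ℕ} (hn : n < k) :
    splitOff k (n + 1) = insert ⟨n, hn⟩ (splitOff k n) := by
  ext i
  simp only [splitOff, mem_filter, mem_univ, true_and, mem_insert, Fin.ext_iff]
  omega

lemma card_splitOff {k n : ℕ} (hn : n ≤ k) : #(splitOff k n) = n := by
  rw [splitOff, Fin.card_filter_val_lt, min_eq_right hn]

section Greedy

variable {k : ℕ} {S : Fin k → Finset V} (x : Fin k → V)

def remainder (n : ℕ) : Finset V := univ \ (splitOff k n).image x

def greedyPartition (n : ℕ) : Finset (Finset V) :=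
  insert (remainder x n) ((splitOff k n).image fun i => {x i})

lemma remainder_notMem_image (n : ℕ) :
    remainder x n ∉ (splitOff k n).image fun i => {x i} := by
  intro h
  obtain ⟨i, hi, hxi⟩ := mem_image.1 h
  have : x i ∈ remainder x n := hxi ▸ mem_singleton_self (x i)
  exact (mem_sdiff.1 this).2 (mem_image_of_mem x hi)

lemma remainder_succ {n : ℕ} (hn : n < k) :
    remainder x (n + 1) = remainder x n \ {x ⟨n, hn⟩} := by
  rw [remainder, remainder, splitOff_succ hn, image_insert, sdiff_insert, erase_eq]

lemma greedyPartition_zero : greedyPartition x 0 = {univ} := by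
  simp [greedyPartition, remainder, splitOff_zero]

lemma greedyPartition_succ {n : ℕ} (hn : n < k) :
    greedyPartition x (n + 1) = insert {x ⟨n, hn⟩}
      (insert (remainder x n \ {x ⟨n, hn⟩}) ((greedyPartition x n).erase (remainder x n))) := by
  rw [greedyPartition, greedyPartition, erase_insert (remainder_notMem_image x n),
    remainder_succ x hn, splitOff_succ hn, image_insert, insert_comm]

variable {x}

lemma mem_remainder_self (hx : ∀ i, x i ∈ S i) (h_disj : ∀ i j, i ≠ j → Disjoint (S i) (S j))
    {n : ℕ} (hn : n < k) : x ⟨n, hn⟩ ∈ remainder x n := by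
  simp only [remainder, mem_sdiff, mem_univ, true_and, mem_image, not_exists, not_and]
  intro i hi hxi
  have : i = ⟨n, hn⟩ := eq_of_mem_of_mem h_disj (hx i) (hxi ▸ hx ⟨n, hn⟩)
  simp [this, splitOff] at hi

lemma remainder_inter_nonempty (hx : ∀ i, x i ∈ S i)
    (h_disj : ∀ i j, i ≠ j → Disjoint (S i) (S j)) (h_big : ∀ i, 2 ≤ #(S i)) (n : ℕ) (j : Fin k) :
    (remainder x n ∩ S j).Nonempty := by
  obtain ⟨y, hy, hyx⟩ := exists_mem_ne (h_big j) (x j)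
  refine ⟨y, mem_inter.2 ⟨?_, hy⟩⟩
  simp only [remainder, mem_sdiff, mem_univ, true_and, mem_image, not_exists, not_and]
  rintro i - rfl
  exact hyx (by rw [eq_of_mem_of_mem h_disj (hx i) hy])

lemma sum_truncCover_greedyPartition (hk : 2 ≤ k) (hx : ∀ i, x i ∈ S i)
    (h_disj : ∀ i j, i ≠ j → Disjoint (S i) (S j)) (h_big : ∀ i, 2 ≤ #(S i)) :
    ∑ X ∈ greedyPartition x (k - 1), truncCover k S X = 2 * k - 2 := by
  have hx_inj : Function.Injective x := fun i j hij =>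
    eq_of_mem_of_mem h_disj (hx i) (hij ▸ hx j)
  rw [greedyPartition, sum_insert (remainder_notMem_image x _),
    truncCover_eq_sub_one hk (remainder_inter_nonempty hx h_disj h_big _),
    sum_image fun i _ j _ hij => hx_inj (singleton_inj.1 hij)]
  simp only [truncCover_eq_one hk h_disj (singleton_nonempty _) (singleton_subset_iff.2 (hx _)),
    sum_const, card_splitOff (Nat.sub_le k 1), nsmul_one, Nat.cast_pred (by omega : 0 < k)]
  ring

lemma greedySplitSeqFree_greedyPartition (hk : 2 ≤ k) (hx : ∀ i, x i ∈ S i)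
    (h_disj : ∀ i j, i ≠ j → Disjoint (S i) (S j)) (h_big : ∀ i, 2 ≤ #(S i))
    (h_cover : ∀ v : V, ∃ i, v ∈ S i) :
    GreedySplitSeqFree (truncCover k S) k fun m => greedyPartition x (m - 1) := by
  refine ⟨greedyPartition_zero x, fun m hm hmk => ?_⟩
  obtain ⟨n, rfl⟩ : ∃ n, m = n + 1 := ⟨m - 1, by omega⟩
  simp only [Nat.add_sub_cancel]
  have hn : n < k := by omega
  have hR := remainder_inter_nonempty hx h_disj h_big
  have hsplit : {x ⟨n, hn⟩} ⊂ remainder x n := by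
    refine (singleton_subset_iff.2 (mem_remainder_self hx h_disj hn)).ssubset_of_not_subset ?_
    rw [← sdiff_nonempty, ← remainder_succ x hn]
    exact (hR (n + 1) ⟨n, hn⟩).mono inter_subset_left
  refine ⟨remainder x n, mem_insert_self _ _, {x ⟨n, hn⟩}, singleton_nonempty _, hsplit,
    greedyPartition_succ x hn, fun W' hW' X' hX' hX'W' => ?_⟩
  rcases mem_insert.1 hW' with rfl | hW'
  · rw [truncCover_eq_one hk h_disj (singleton_nonempty _) (singleton_subset_iff.2 (hx _)),
      ← remainder_succ x hn, truncCover_eq_sub_one hk (hR _), truncCover_eq_sub_one hk (hR _)]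
    linarith [le_truncCover_add_truncCover_sdiff hk h_cover (hR n) hX' hX'W']
  · obtain ⟨i, -, rfl⟩ := mem_image.1 hW'
    exact absurd (ssubset_singleton_iff.1 hX'W') hX'.ne_empty

end Greedy

/-- tightness of the `(2 - 2/k)` analysis of greedy splitting for monotone
submodular `k`-partition. The function `f(X) = min(k - 1, #{i : X ∩ Sᵢ ≠ ∅})` is monotone
and submodular with `f(∅) = 0`; the minimum of `Σ_{X ∈ Q} f(X)` over `k`-partitions `Q`
is `k`, attained by `{S₁, …, S_k}`; and some greedy splitting sequence outputs a
partition of total value `2k - 2 = (2 - 2/k)·k`. -/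
theorem greedy_splitting_monotone_tight
    (k : ℕ) (hk : 2 ≤ k)
    (S : Fin k → Finset V)
    (h_big : ∀ i, 2 ≤ (S i).card)
    (h_disj : ∀ i j, i ≠ j → Disjoint (S i) (S j))
    (h_cover : ∀ v : V, ∃ i, v ∈ S i) :
    (∀ ⦃A B : Finset V⦄, A ⊆ B → truncCover k S A ≤ truncCover k S B) ∧
    (∀ A B : Finset V,
      truncCover k S (A ∪ B) + truncCover k S (A ∩ B) ≤
        truncCover k S A + truncCover k S B) ∧
    truncCover k S ∅ = 0 ∧
    (∀ Q : Finset (Finset V), IsPartition Q → Q.card = k →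
      (k : ℝ) ≤ ∑ X ∈ Q, truncCover k S X) ∧
    IsPartition (Finset.univ.image S) ∧
    (Finset.univ.image S).card = k ∧
    (∑ X ∈ Finset.univ.image S, truncCover k S X) = (k : ℝ) ∧
    ∃ P : ℕ → Finset (Finset V), GreedySplitSeqFree (truncCover k S) k P ∧
      (∑ X ∈ P k, truncCover k S X) = 2 * (k : ℝ) - 2 ∧
      (∑ X ∈ P k, truncCover k S X) = (2 - 2 / (k : ℝ)) * (k : ℝ) := by
  have hS : ∀ i, (S i).Nonempty := fun i => card_pos.1 (zero_lt_two.trans_le (h_big i))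
  refine ⟨fun A B => truncCover_mono, truncCover_union_add_truncCover_inter_le,
    truncCover_empty, fun Q hQ hQk => hQk ▸ card_le_sum_truncCover hk h_cover hQ.1,
    isPartition_image hS h_disj h_cover, ?_, sum_truncCover_image hk hS h_disj, ?_⟩
  · rw [card_image_of_injective _ (injective_of_pairwise_disjoint hS h_disj), card_univ,
      Fintype.card_fin]
  choose x hx using hS
  have hsum := sum_truncCover_greedyPartition hk hx h_disj h_big
  refine ⟨_, greedySplitSeqFree_greedyPartition hk hx h_disj h_big h_cover, hsum, ?_⟩
  rw [hsum]
  field_simp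
end

section
/- Let G = (V, E) be a finite simple graph with edge weights w : E → ℝ≥0, and define the graph coverage function f(S) = Σ_{e ∈ E : e has at least one endpoint in S} w(e) for S ⊆ V. Let P and P* be partitions of V such that Σ_{e crossing P} w(e) ≤ 2 · Σ_{e crossing P*} w(e). Then Σ_{S ∈ P} f(S) ≤ (4/3) · Σ_{S ∈ P*} f(S). -/
open Finset

variable {V : Type*} [Fintype V] [DecidableEq V]

/-- The graph coverage function: total weight of edges with at least one endpoint in `S`. -/
noncomputable def coverage (G : SimpleGraph V) [DecidableRel G.Adj] (w : Sym2 V → ℝ)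
    (S : Finset V) : ℝ :=
  ∑ e ∈ G.edgeFinset, if ∃ v ∈ S, v ∈ e then w e else 0

/-- The edge `e` crosses the partition `P`: its two endpoints lie in different classes. -/
def Crosses (P : Finset (Finset V)) (e : Sym2 V) : Prop :=
  ∃ u v : V, e = s(u, v) ∧ ∀ X ∈ P, ¬ (u ∈ X ∧ v ∈ X)

instance (P : Finset (Finset V)) (e : Sym2 V) : Decidable (Crosses P e) :=
  decidable_of_iff (∃ u v : V, e = s(u, v) ∧ ∀ X ∈ P, ¬ (u ∈ X ∧ v ∈ X)) Iff.rfl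

/-! Every edge meets one class of a partition if it lies inside a class and two if it crosses,
so `∑ S ∈ P, f S` is the total weight plus the cut weight of `P`. With `W` the total weight,
the cut weight `C` of `P` satisfies `C ≤ W` and `C ≤ 2 C*`, hence
`C ≤ W / 3 + (2 / 3) (2 C*)`, which is `W + C ≤ (4 / 3) (W + C*)`. -/

noncomputable def cutWeight (G : SimpleGraph V) [DecidableRel G.Adj] (w : Sym2 V → ℝ)
    (P : Finset (Finset V)) : ℝ :=
  ∑ e ∈ G.edgeFinset, if Crosses P e then w e else 0

theorem crosses_mk_iff {α : Type*} {P : Finset (Finset α)} {u v : α} :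
    Crosses P s(u, v) ↔ ∀ X ∈ P, ¬ (u ∈ X ∧ v ∈ X) := by
  refine ⟨?_, fun h => ⟨u, v, rfl, h⟩⟩
  rintro ⟨a, b, hab, h⟩
  rcases Sym2.eq_iff.mp hab with ⟨rfl, rfl⟩ | ⟨rfl, rfl⟩
  · exact h
  · exact fun X hX huv => h X hX huv.symm

namespace IsPartition

variable {P : Finset (Finset V)}

theorem exists_mem_forall_eq (hP : IsPartition P) (u : V) :
    ∃ X ∈ P, u ∈ X ∧ ∀ Y ∈ P, u ∈ Y → Y = X := by
  obtain ⟨-, hdisj, hsup⟩ := hP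
  obtain ⟨X, hX, huX⟩ := Finset.mem_sup.mp (hsup ▸ mem_univ u : u ∈ P.sup id)
  refine ⟨X, hX, huX, fun Y hY huY => ?_⟩
  by_contra hne
  exact Finset.disjoint_left.mp (hdisj Y hY X hX hne) huY huX

theorem card_filter_meets (hP : IsPartition P) (e : Sym2 V) :
    #{S ∈ P | ∃ v ∈ S, v ∈ e} = if Crosses P e then 2 else 1 := by
  induction e using Sym2.ind with
  | _ u v =>
  obtain ⟨X, hX, huX, hXu⟩ := hP.exists_mem_forall_eq u
  obtain ⟨Y, hY, hvY, hYv⟩ := hP.exists_mem_forall_eq v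
  have hfilter : {S ∈ P | ∃ x ∈ S, x ∈ s(u, v)} = {X, Y} := by
    ext S
    simp only [mem_filter, mem_insert, mem_singleton, Sym2.mem_iff]
    constructor
    · rintro ⟨hS, x, hxS, rfl | rfl⟩
      · exact .inl (hXu S hS hxS)
      · exact .inr (hYv S hS hxS)
    · rintro (rfl | rfl)
      · exact ⟨hX, u, huX, .inl rfl⟩
      · exact ⟨hY, v, hvY, .inr rfl⟩
  have hcross : Crosses P s(u, v) ↔ X ≠ Y := by
    rw [crosses_mk_iff]
    refine ⟨fun h hXY => h X hX ⟨huX, hXY ▸ hvY⟩, fun hXY Z hZ ⟨huZ, hvZ⟩ => ?_⟩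
    exact hXY ((hXu Z hZ huZ).symm.trans (hYv Z hZ hvZ))
  rw [hfilter, if_congr hcross rfl rfl]
  by_cases hXY : X = Y
  · simp [hXY]
  · simp [hXY, card_pair hXY]

theorem sum_coverage (hP : IsPartition P) (G : SimpleGraph V) [DecidableRel G.Adj]
    (w : Sym2 V → ℝ) :
    ∑ S ∈ P, coverage G w S = ∑ e ∈ G.edgeFinset, w e + cutWeight G w P := by
  simp only [coverage]
  rw [Finset.sum_comm, cutWeight, ← Finset.sum_add_distrib]
  refine Finset.sum_congr rfl fun e _ => ?_
  rw [← Finset.sum_filter, Finset.sum_const, hP.card_filter_meets]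
  split_ifs <;> norm_num [two_smul]

end IsPartition

theorem cutWeight_le_sum (G : SimpleGraph V) [DecidableRel G.Adj] {w : Sym2 V → ℝ}
    (hw : ∀ e, 0 ≤ w e) (P : Finset (Finset V)) :
    cutWeight G w P ≤ ∑ e ∈ G.edgeFinset, w e :=
  Finset.sum_le_sum fun e _ => by split_ifs <;> simp [hw e]

/-- if the cut value of a partition `P` is at most twice the cut value of a
partition `P*`, then the coverage value of `P` is at most `4/3` times that of `P*`. -/
theorem coverage_four_thirds_of_cut_two_approx
    (G : SimpleGraph V) [DecidableRel G.Adj] (w : Sym2 V → ℝ) (hw : ∀ e, 0 ≤ w e)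
    (P Pstar : Finset (Finset V)) (hP : IsPartition P) (hPstar : IsPartition Pstar)
    (h_cut : (∑ e ∈ G.edgeFinset, if Crosses P e then w e else 0) ≤
      2 * ∑ e ∈ G.edgeFinset, if Crosses Pstar e then w e else 0) :
    ∑ S ∈ P, coverage G w S ≤ (4 / 3) * ∑ S ∈ Pstar, coverage G w S := by
  have h_cut : cutWeight G w P ≤ 2 * cutWeight G w Pstar := h_cut
  have h_total := cutWeight_le_sum G hw P
  rw [hP.sum_coverage, hPstar.sum_coverage]
  linarith
end

section
/- Let V be a finite set, f : Finset V → ℝ a nonnegative symmetric submodular function with f(∅) = 0, and H a tree on vertex set V. For each edge e of H, let U(e) denote the vertex set of one of the two connected components of H − e (since f is symmetric, f(U(e)) does not depend on which component is chosen). Then for every set C of edges of H, if V_1, …, V_m are the vertex sets of the connected components of H − C, we have Σ_{i=1}^m f(V_i) ≤ 2 · Σ_{e ∈ C} f(U(e)). -/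
/-!
Deleting an edge `e = uv ∈ C` from the forest `H − (C \ {e})` splits the component `X` of `u`
into `X ∩ A` and `X \ A`, where `A = U(e)` is the side of `u` in `H − e`: this is where `e`
being a bridge of the tree `H` enters. Submodularity applied to `(X, A)`, `(X, Aᶜ)` and
`(X ∪ A, X ∪ Aᶜ)`, together with symmetry, gives `f (X ∩ A) + f (X \ A) ≤ f X + 2 f A`.
Inducting on `C` from `comps H = {V}` and `f V = f ∅ = 0` yields the bound.
-/

open Finset
open scoped Classical

variable {V : Type*} [Fintype V] [DecidableEq V]

/-- The vertex set of the connected component of `G` containing `u`. -/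
noncomputable def compOf (G : SimpleGraph V) (u : V) : Finset V :=
  Finset.univ.filter fun x => G.Reachable u x

/-- The family of vertex sets of the connected components of `G`. -/
noncomputable def comps (G : SimpleGraph V) : Finset (Finset V) :=
  Finset.univ.image fun v => compOf G v

lemma inter_add_sdiff_le_of_submodular (f : Finset V → ℝ)
    (h_submod : ∀ A B : Finset V, f (A ∪ B) + f (A ∩ B) ≤ f A + f B)
    (h_symm : ∀ A : Finset V, f A = f (univ \ A)) (h_empty : f ∅ = 0) (X A : Finset V) :
    f (X ∩ A) + f (X \ A) ≤ f X + 2 * f A := by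
  have h_univ : f univ = 0 := by rw [h_symm, Finset.sdiff_self, h_empty]
  have h_sdiff : X \ A = X ∩ (univ \ A) := by ext; simp
  have h_sup : (X ∪ A) ∪ (X ∪ (univ \ A)) = univ := by ext x; by_cases x ∈ A <;> simp [*]
  have h_inf : (X ∪ A) ∩ (X ∪ (univ \ A)) = X := by ext x; by_cases x ∈ A <;> simp [*]
  have := h_submod X A
  have := h_submod X (univ \ A)
  have := h_submod (X ∪ A) (X ∪ (univ \ A))
  rw [h_sup, h_inf, h_univ] at this
  rw [h_sdiff]
  linarith [h_symm A]

namespace SimpleGraph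

variable {G H : SimpleGraph V} {u v w : V}

omit [Fintype V] [DecidableEq V] in
lemma Reachable.deleteEdges_singleton_or {a b : V} (h : G.Reachable a b) :
    (G.deleteEdges {s(u, v)}).Reachable a b ∨ (G.deleteEdges {s(u, v)}).Reachable a u ∨
      (G.deleteEdges {s(u, v)}).Reachable a v := by
  obtain ⟨p⟩ := h
  induction p with
  | nil => exact .inl .rfl
  | @cons a c b hac p ih =>
    by_cases he : s(a, c) = s(u, v)
    · rcases Sym2.eq_iff.1 he with ⟨rfl, -⟩ | ⟨rfl, -⟩
      exacts [.inr (.inl .rfl), .inr (.inr .rfl)]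
    · have hac' : (G.deleteEdges {s(u, v)}).Reachable a c :=
        (deleteEdges_adj.2 ⟨hac, he⟩).reachable
      rcases ih with h | h | h
      exacts [.inl (hac'.trans h), .inr (.inl (hac'.trans h)), .inr (.inr (hac'.trans h))]

lemma mem_compOf : w ∈ compOf G u ↔ G.Reachable u w := by
  simp [compOf]

lemma compOf_eq_compOf_iff : compOf G u = compOf G w ↔ G.Reachable u w := by
  refine ⟨fun h => mem_compOf.1 (h ▸ mem_compOf.2 .rfl), fun h => ?_⟩
  ext x
  simp only [mem_compOf]
  exact ⟨h.symm.trans, h.trans⟩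

lemma mem_comps {X : Finset V} : X ∈ comps G ↔ ∃ w, compOf G w = X := by
  simp [comps]

lemma eq_compOf_of_mem_comps {X : Finset V} (hX : X ∈ comps G) (hw : w ∈ X) :
    X = compOf G w := by
  obtain ⟨x, rfl⟩ := mem_comps.1 hX
  exact compOf_eq_compOf_iff.2 (mem_compOf.1 hw)

lemma comps_eq_singleton_univ (hG : G.Connected) : comps G = {univ} := by
  have h_univ (w : V) : compOf G w = univ := by ext; simp [mem_compOf, hG.preconnected w]
  obtain ⟨w⟩ := hG.nonempty
  ext X
  simp only [mem_comps, h_univ, mem_singleton]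
  exact ⟨fun ⟨_, h⟩ => h.symm, fun h => ⟨w, h.symm⟩⟩

lemma compOf_deleteEdges_of_not_reachable (hadj : G.Adj u v) (hw : ¬ G.Reachable u w) :
    compOf (G.deleteEdges {s(u, v)}) w = compOf G w := by
  ext x
  simp only [mem_compOf]
  refine ⟨fun h => h.mono (deleteEdges_le _), fun h => ?_⟩
  rcases h.deleteEdges_singleton_or with h | h | h
  · exact h
  · exact absurd (h.mono (deleteEdges_le _)).symm hw
  · exact absurd (hadj.reachable.trans (h.mono (deleteEdges_le _)).symm) hw

namespace IsBridge

omit [Fintype V] [DecidableEq V] in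
lemma reachable_deleteEdges_right_iff (hb : G.IsBridge s(u, v)) (hw : G.Reachable u w) :
    (G.deleteEdges {s(u, v)}).Reachable v w ↔ ¬ (G.deleteEdges {s(u, v)}).Reachable u w := by
  refine ⟨fun hv hu => isBridge_iff.1 hb (hu.trans hv.symm), fun hu => ?_⟩
  rcases hw.symm.deleteEdges_singleton_or with h | h | h
  exacts [absurd h.symm hu, absurd h.symm hu, h.symm]

lemma comps_deleteEdges (hb : G.IsBridge s(u, v)) (hadj : G.Adj u v) :
    comps (G.deleteEdges {s(u, v)}) = insert (compOf (G.deleteEdges {s(u, v)}) u)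
      (insert (compOf (G.deleteEdges {s(u, v)}) v) ((comps G).erase (compOf G u))) := by
  ext X
  simp only [mem_insert, mem_erase, mem_comps]
  constructor
  · rintro ⟨w, rfl⟩
    by_cases hw : G.Reachable u w
    · by_cases hu : (G.deleteEdges {s(u, v)}).Reachable u w
      · exact .inl (compOf_eq_compOf_iff.2 hu).symm
      · have hv := (hb.reachable_deleteEdges_right_iff hw).2 hu
        exact .inr (.inl (compOf_eq_compOf_iff.2 hv).symm)
    · rw [compOf_deleteEdges_of_not_reachable hadj hw]
      exact .inr (.inr ⟨mt compOf_eq_compOf_iff.1 (mt Reachable.symm hw), w, rfl⟩)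
  · rintro (rfl | rfl | ⟨hne, w, rfl⟩)
    · exact ⟨u, rfl⟩
    · exact ⟨v, rfl⟩
    · have hw : ¬ G.Reachable u w := mt compOf_eq_compOf_iff.2 (Ne.symm hne)
      exact ⟨w, compOf_deleteEdges_of_not_reachable hadj hw⟩

lemma sum_comps_deleteEdges_add {M : Type*} [AddCommMonoid M] (g : Finset V → M)
    (hb : G.IsBridge s(u, v)) (hadj : G.Adj u v) :
    ∑ X ∈ comps (G.deleteEdges {s(u, v)}), g X + g (compOf G u) =
      ∑ X ∈ comps G, g X + g (compOf (G.deleteEdges {s(u, v)}) u) +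
        g (compOf (G.deleteEdges {s(u, v)}) v) := by
  have hsep : compOf (G.deleteEdges {s(u, v)}) u ≠ compOf (G.deleteEdges {s(u, v)}) v :=
    mt compOf_eq_compOf_iff.1 (isBridge_iff.1 hb)
  have hnot_mem (x : V) (hx : G.Reachable u x) :
      compOf (G.deleteEdges {s(u, v)}) x ∉ (comps G).erase (compOf G u) := fun h => by
    have hx' := eq_compOf_of_mem_comps (mem_of_mem_erase h) (mem_compOf.2 .rfl)
    exact ne_of_mem_erase h (hx'.trans (compOf_eq_compOf_iff.2 hx).symm)
  have hX : compOf G u ∈ comps G := mem_comps.2 ⟨u, rfl⟩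
  rw [hb.comps_deleteEdges hadj, sum_insert (by simp [hsep, hnot_mem u .rfl]),
    sum_insert (hnot_mem v hadj.reachable), ← add_sum_erase _ g hX]
  abel

end IsBridge

section Subgraph

variable (hGH : G ≤ H) (hb : H.IsBridge s(u, v))
include hGH hb

lemma reachable_deleteEdges_iff_of_le (hw : G.Reachable u w) :
    (G.deleteEdges {s(u, v)}).Reachable u w ↔ (H.deleteEdges {s(u, v)}).Reachable u w := by
  refine ⟨fun h => h.mono (deleteEdges_mono hGH), fun hH => ?_⟩
  by_contra hG
  have hv := ((hb.anti hGH).reachable_deleteEdges_right_iff hw).2 hG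
  exact isBridge_iff.1 hb (hH.trans (hv.mono (deleteEdges_mono hGH)).symm)

lemma compOf_deleteEdges_left :
    compOf (G.deleteEdges {s(u, v)}) u = compOf G u ∩ compOf (H.deleteEdges {s(u, v)}) u := by
  ext w
  simp only [mem_inter, mem_compOf]
  constructor
  · intro h
    have hw : G.Reachable u w := h.mono (deleteEdges_le _)
    exact ⟨hw, (reachable_deleteEdges_iff_of_le hGH hb hw).1 h⟩
  · rintro ⟨hw, h⟩
    exact (reachable_deleteEdges_iff_of_le hGH hb hw).2 h

lemma compOf_deleteEdges_right (hadj : G.Adj u v) :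
    compOf (G.deleteEdges {s(u, v)}) v = compOf G u \ compOf (H.deleteEdges {s(u, v)}) u := by
  ext w
  simp only [mem_sdiff, mem_compOf]
  constructor
  · intro h
    have hw : G.Reachable u w := hadj.reachable.trans (h.mono (deleteEdges_le _))
    exact ⟨hw, by rwa [← reachable_deleteEdges_iff_of_le hGH hb hw,
      ← (hb.anti hGH).reachable_deleteEdges_right_iff hw]⟩
  · rintro ⟨hw, h⟩
    rwa [(hb.anti hGH).reachable_deleteEdges_right_iff hw,
      reachable_deleteEdges_iff_of_le hGH hb hw]

lemma sum_comps_deleteEdges_le (f : Finset V → ℝ)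
    (h_submod : ∀ A B : Finset V, f (A ∪ B) + f (A ∩ B) ≤ f A + f B)
    (h_symm : ∀ A : Finset V, f A = f (univ \ A)) (h_empty : f ∅ = 0) (hadj : G.Adj u v) :
    ∑ X ∈ comps (G.deleteEdges {s(u, v)}), f X ≤
      ∑ X ∈ comps G, f X + 2 * f (compOf (H.deleteEdges {s(u, v)}) u) := by
  have hsplit := (hb.anti hGH).sum_comps_deleteEdges_add f hadj
  rw [compOf_deleteEdges_left hGH hb, compOf_deleteEdges_right hGH hb hadj] at hsplit
  linarith [inter_add_sdiff_le_of_submodular f h_submod h_symm h_empty (compOf G u)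
    (compOf (H.deleteEdges {s(u, v)}) u)]

end Subgraph

end SimpleGraph

open SimpleGraph in
theorem sum_over_components_le_twice_sum_over_cut_edges_general
    (f : Finset V → ℝ)
    (h_submod : ∀ A B : Finset V, f (A ∪ B) + f (A ∩ B) ≤ f A + f B)
    (h_symm : ∀ A : Finset V, f A = f (Finset.univ \ A))
    (h_empty_f : f ∅ = 0)
    (H : SimpleGraph V) (hH : H.IsTree)
    (C : Finset (Sym2 V)) (hC : (C : Set (Sym2 V)) ⊆ H.edgeSet)
    (U : Sym2 V → Finset V)
    (hU : ∀ e ∈ C, ∃ u v : V, e = s(u, v) ∧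
      U e = compOf (H.deleteEdges ({e} : Set (Sym2 V))) u) :
    ∑ X ∈ comps (H.deleteEdges (C : Set (Sym2 V))), f X ≤ 2 * ∑ e ∈ C, f (U e) := by
  induction C using Finset.induction_on with
  | empty =>
    simp [comps_eq_singleton_univ hH.connected, h_symm univ, h_empty_f]
  | @insert e C he ih =>
    obtain ⟨u, v, rfl, hUe⟩ := hU _ (mem_insert_self _ _)
    have hadjH : H.Adj u v := hC (mem_insert_self _ _)
    have hadj : (H.deleteEdges C).Adj u v := deleteEdges_adj.2 ⟨hadjH, by simpa using he⟩
    have hb : H.IsBridge s(u, v) := isAcyclic_iff_forall_adj_isBridge.1 hH.isAcyclic hadjH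
    have ih' := ih (subset_trans (by simp) hC) fun e he => hU e (mem_insert_of_mem he)
    rw [coe_insert, Set.insert_eq, Set.union_comm, ← deleteEdges_deleteEdges, sum_insert he, hUe]
    linarith [sum_comps_deleteEdges_le (deleteEdges_le _) hb f h_submod h_symm h_empty_f hadj]

/-- for a nonnegative symmetric submodular function `f` and a tree `H` on
`V`, the total `f`-value of the components of `H - C` is at most twice the sum over
`e ∈ C` of `f` evaluated on one side `U(e)` of the edge `e`. -/
theorem sum_over_components_le_twice_sum_over_cut_edges
    (f : Finset V → ℝ)
    (h_nonneg : ∀ A : Finset V, 0 ≤ f A)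
    (h_submod : ∀ A B : Finset V, f (A ∪ B) + f (A ∩ B) ≤ f A + f B)
    (h_symm : ∀ A : Finset V, f A = f (Finset.univ \ A))
    (h_empty_f : f ∅ = 0)
    (H : SimpleGraph V) (hH : H.IsTree)
    (C : Finset (Sym2 V)) (hC : (C : Set (Sym2 V)) ⊆ H.edgeSet)
    (U : Sym2 V → Finset V)
    (hU : ∀ e ∈ C, ∃ u v : V, e = s(u, v) ∧
      U e = compOf (H.deleteEdges ({e} : Set (Sym2 V))) u) :
    ∑ X ∈ comps (H.deleteEdges (C : Set (Sym2 V))), f X ≤ 2 * ∑ e ∈ C, f (U e) :=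
  sum_over_components_le_twice_sum_over_cut_edges_general f h_submod h_symm h_empty_f H hH C hC U hU
end
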